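/- arXiv:1605.00687 — 2 statements merged into one kernel-verified Lean document; each statement's English description precedes it below -/
import Mathlib

section
/- Let $(\Omega, \mathcal{F}, \mathbb{P})$ be a probability space, $a: \Omega \to \mathbb{R}^{d\times d}$ with positive semidefinite symmetric part, $\mu(\omega) := \sup_{\xi: a\xi\neq 0} |a\xi|^2/(\xi\cdot a\xi)$ satisfying $\mathbb{E}[\mu] \le K$, and $V: \Omega \to \mathbb{R}^d$ a random vector with $\mathbb{E}[V\cdot aV] < \infty$. Then $|\mathbb{E}[aV]| \le \mathbb{E}[\mu]^{1/2}\, \mathbb{E}[V \cdot a V]^{1/2}$. -/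
/-!
Pointwise, `|aV| ≤ √(V·aV · μ)` by the definition of `μ`. Taking the Euclidean norm inside the
expectation, `|E[aV]| ≤ E[|aV|] ≤ E[√μ √(V·aV)]`, and Cauchy–Schwarz in `L²` bounds the last
expectation by `E[μ]^{1/2} E[V·aV]^{1/2}`.
-/

open MeasureTheory Matrix

theorem sqrt_dotProduct_integral_le {α ι : Type*} [MeasurableSpace α] {μ : Measure α}
    [Fintype ι] (F : α → ι → ℝ) :
    √((∫ x, F x ∂μ) ⬝ᵥ ∫ x, F x ∂μ) ≤ ∫ x, √(F x ⬝ᵥ F x) ∂μ := by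
  have hnorm : ∀ v : ι → ℝ, ‖(EuclideanSpace.equiv ι ℝ).symm v‖ = √(v ⬝ᵥ v) := by
    intro v
    rw [EuclideanSpace.norm_eq]
    simp [dotProduct, sq]
  simpa only [hnorm, ContinuousLinearEquiv.integral_comp_comm] using
    norm_integral_le_integral_norm (μ := μ) fun x => (EuclideanSpace.equiv ι ℝ).symm (F x)

namespace MeasureTheory

variable {α : Type*} [MeasurableSpace α] {μ : Measure α} {f g : α → ℝ}

theorem Integrable.memLp_two_sqrt (hf : Integrable f μ) (hf0 : 0 ≤ᵐ[μ] f) :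
    MemLp (fun x => √(f x)) 2 μ := by
  rw [memLp_two_iff_integrable_sq
    (Real.continuous_sqrt.comp_aestronglyMeasurable hf.aestronglyMeasurable)]
  refine hf.congr ?_
  filter_upwards [hf0] with x hx
  exact (Real.sq_sqrt hx).symm

theorem integral_sqrt_mul_sqrt_le (hf : Integrable f μ) (hg : Integrable g μ)
    (hf0 : 0 ≤ᵐ[μ] f) (hg0 : 0 ≤ᵐ[μ] g) :
    ∫ x, √(f x) * √(g x) ∂μ ≤ (∫ x, f x ∂μ) ^ (1 / (2 : ℝ)) * (∫ x, g x ∂μ) ^ (1 / (2 : ℝ)) := by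
  have hsq : ∀ {h : α → ℝ}, 0 ≤ᵐ[μ] h → ∫ x, √(h x) ^ (2 : ℝ) ∂μ = ∫ x, h x ∂μ := fun h0 =>
    integral_congr_ae <| by
      filter_upwards [h0] with x hx
      rw [Real.rpow_two, Real.sq_sqrt hx]
  have holder := integral_mul_le_Lp_mul_Lq_of_nonneg (μ := μ) Real.HolderConjugate.two_two
    (.of_forall fun x => Real.sqrt_nonneg (f x)) (.of_forall fun x => Real.sqrt_nonneg (g x))
    (by simpa using hf.memLp_two_sqrt hf0) (by simpa using hg.memLp_two_sqrt hg0)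
  rwa [hsq hf0, hsq hg0] at holder

end MeasureTheory

theorem stmt_4_general {Ω : Type*} [MeasurableSpace Ω] (P : Measure Ω)
    (d : ℕ) (a : Ω → Matrix (Fin d) (Fin d) ℝ) (mu : Ω → ℝ)
    (V : Ω → Fin d → ℝ)
    (hpsd : ∀ ω (ξ : Fin d → ℝ), 0 ≤ ξ ⬝ᵥ (a ω).mulVec ξ)
    (hmu0 : ∀ ω, 0 ≤ mu ω)
    (hmu : ∀ ω (ξ : Fin d → ℝ),
      (a ω).mulVec ξ ⬝ᵥ (a ω).mulVec ξ ≤ mu ω * (ξ ⬝ᵥ (a ω).mulVec ξ))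
    (hmuInt : Integrable mu P)
    (hEnergy : Integrable (fun ω => V ω ⬝ᵥ (a ω).mulVec (V ω)) P) :
    Real.sqrt ((∫ ω, (a ω).mulVec (V ω) ∂P) ⬝ᵥ (∫ ω, (a ω).mulVec (V ω) ∂P)) ≤
      (∫ ω, mu ω ∂P) ^ ((1 : ℝ)/2) * (∫ ω, V ω ⬝ᵥ (a ω).mulVec (V ω) ∂P) ^ ((1 : ℝ)/2) := by
  have hmu0' : 0 ≤ᵐ[P] mu := .of_forall hmu0
  have henergy0 : 0 ≤ᵐ[P] fun ω => V ω ⬝ᵥ (a ω).mulVec (V ω) := .of_forall fun ω => hpsd ω (V ω)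
  have hpointwise : ∀ ω, √((a ω).mulVec (V ω) ⬝ᵥ (a ω).mulVec (V ω)) ≤
      √(mu ω) * √(V ω ⬝ᵥ (a ω).mulVec (V ω)) := fun ω => by
    rw [← Real.sqrt_mul (hmu0 ω)]
    exact Real.sqrt_le_sqrt (hmu ω (V ω))
  calc _ ≤ ∫ ω, √((a ω).mulVec (V ω) ⬝ᵥ (a ω).mulVec (V ω)) ∂P := sqrt_dotProduct_integral_le _
    _ ≤ ∫ ω, √(mu ω) * √(V ω ⬝ᵥ (a ω).mulVec (V ω)) ∂P :=
        integral_mono_of_nonneg (.of_forall fun _ => Real.sqrt_nonneg _)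
          ((hmuInt.memLp_two_sqrt hmu0').integrable_mul (hEnergy.memLp_two_sqrt henergy0))
          (.of_forall hpointwise)
    _ ≤ _ := integral_sqrt_mul_sqrt_le hmuInt hEnergy hmu0' henergy0

/-- If the symmetric part of `a` is positive semidefinite, `mu` bounds the ratios
`|aξ|²/(ξ·aξ)` (i.e. `|aξ|² ≤ mu (ξ·aξ)` for all `ξ`), `E[mu] ≤ K`, and the energy
`E[V·aV]` is finite, then `|E[aV]| ≤ E[mu]^{1/2} E[V·aV]^{1/2}`. -/
theorem stmt_4 {Ω : Type*} [MeasurableSpace Ω] (P : Measure Ω) [IsProbabilityMeasure P]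
    (d : ℕ) (a : Ω → Matrix (Fin d) (Fin d) ℝ) (mu : Ω → ℝ) (K : ℝ) (hK : 0 < K)
    (V : Ω → Fin d → ℝ)
    (hpsd : ∀ ω (ξ : Fin d → ℝ), 0 ≤ ξ ⬝ᵥ (a ω).mulVec ξ)
    (hmu0 : ∀ ω, 0 ≤ mu ω)
    (hmu : ∀ ω (ξ : Fin d → ℝ),
      (a ω).mulVec ξ ⬝ᵥ (a ω).mulVec ξ ≤ mu ω * (ξ ⬝ᵥ (a ω).mulVec ξ))
    (hmuInt : Integrable mu P) (hKbd : ∫ ω, mu ω ∂P ≤ K)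
    (hmeas : AEStronglyMeasurable (fun ω => (a ω).mulVec (V ω)) P)
    (hEnergy : Integrable (fun ω => V ω ⬝ᵥ (a ω).mulVec (V ω)) P) :
    Real.sqrt ((∫ ω, (a ω).mulVec (V ω) ∂P) ⬝ᵥ (∫ ω, (a ω).mulVec (V ω) ∂P)) ≤
      (∫ ω, mu ω ∂P) ^ ((1 : ℝ)/2) * (∫ ω, V ω ⬝ᵥ (a ω).mulVec (V ω) ∂P) ^ ((1 : ℝ)/2) :=
  stmt_4_general P d a mu V hpsd hmu0 hmu hmuInt hEnergy
end

section
/- (Equation for the homogenization error.) Let $a: B \to \mathbb{R}^{d\times d}$, $\bar a$ a constant matrix, $u$ a weak solution of $-\nabla\cdot a\nabla u = 0$ in $B$, $v$ a smooth solution of $-\nabla\cdot\bar a\nabla v = 0$ in $B$, $\eta$ a smooth cutoff, and $(\phi_i, \sigma_i)_{i=1,\dots,d}$ fields on $B$ with $\sigma_i$ skew-symmetric matrices satisfying $-\nabla\cdot a(\nabla\phi_i + e_i) = 0$ and $a(\nabla\phi_i + e_i) - \bar a e_i = \nabla\cdot\sigma_i$ in $B$ (weakly). Then $w := u - (v + \eta\,\phi_i\partial_i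 v)$ (summation over $i$) satisfies, in the weak sense in $B$, $-\nabla\cdot a\nabla w = \nabla\cdot\big((1-\eta)(a-\bar a)\nabla v + (\phi_i a - \sigma_i)\nabla(\eta\,\partial_i v)\big)$. -/
open MeasureTheory Matrix

/-- Coordinate partial derivative `∂ᵢ f` on `ℝ^d`. -/
noncomputable def pd {d : ℕ} (i : Fin d) (f : EuclideanSpace ℝ (Fin d) → ℝ)
    (x : EuclideanSpace ℝ (Fin d)) : ℝ :=
  fderiv ℝ f x (EuclideanSpace.single i 1)

/-- Coordinate gradient `∇f` on `ℝ^d` as a vector in `Fin d → ℝ`. -/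
noncomputable def grad {d : ℕ} (f : EuclideanSpace ℝ (Fin d) → ℝ)
    (x : EuclideanSpace ℝ (Fin d)) : Fin d → ℝ :=
  fun i => pd i f x

namespace Stmt9Aux

variable {d : ℕ}

theorem pd_contDiff {f : EuclideanSpace ℝ (Fin d) → ℝ} (hf : ContDiff ℝ (⊤ : ℕ∞) f) (i : Fin d) :
    ContDiff ℝ (⊤ : ℕ∞) (pd i f) :=
  (hf.fderiv_right (by simp)).clm_apply contDiff_const

theorem pd_continuous {f : EuclideanSpace ℝ (Fin d) → ℝ} (hf : ContDiff ℝ 1 f) (i : Fin d) :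
    Continuous (pd i f) :=
  (hf.continuous_fderiv one_ne_zero).clm_apply continuous_const

theorem pd_zero_of_nmem {f : EuclideanSpace ℝ (Fin d) → ℝ} (i : Fin d)
    {x : EuclideanSpace ℝ (Fin d)} (h : x ∉ tsupport f) : pd i f x = 0 := by
  have h2 : fderiv ℝ f x = 0 := by
    by_contra hne
    exact h (support_fderiv_subset (𝕜 := ℝ) (by simpa [Function.mem_support] using hne))
  simp [pd, h2]

theorem pd_mul {f g : EuclideanSpace ℝ (Fin d) → ℝ} {x : EuclideanSpace ℝ (Fin d)}
    (hf : DifferentiableAt ℝ f x) (hg : DifferentiableAt ℝ g x) (k : Fin d) :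
    pd k (fun y => f y * g y) x = f x * pd k g x + g x * pd k f x := by
  unfold pd
  rw [fderiv_fun_mul hf hg]
  simp

theorem pd_pd_symm {ζ : EuclideanSpace ℝ (Fin d) → ℝ} (hζ : ContDiff ℝ (⊤ : ℕ∞) ζ)
    (j k : Fin d) (x : EuclideanSpace ℝ (Fin d)) :
    pd k (fun y => pd j ζ y) x = pd j (fun y => pd k ζ y) x := by
  unfold pd
  have hd : DifferentiableAt ℝ (fderiv ℝ ζ) x :=
    (((hζ.fderiv_right (by exact WithTop.coe_le_coe.mpr le_top : (1 : WithTop ℕ∞) + 1 ≤ ((⊤ : ℕ∞) : WithTop ℕ∞))).differentiable one_ne_zero)).differentiableAt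
  have h1 : ∀ e e' : EuclideanSpace ℝ (Fin d),
      fderiv ℝ (fun y => fderiv ℝ ζ y e) x e' = fderiv ℝ (fderiv ℝ ζ) x e' e := by
    intro e e'
    rw [fderiv_clm_apply hd (differentiableAt_const e)]
    simp
  rw [h1, h1]
  exact ((hζ.contDiffAt.isSymmSndFDerivAt (by norm_num; exact WithTop.coe_le_coe.mpr le_top)) _ _)

theorem skew_pair (σ S : Fin d → Fin d → ℝ) (hσ : ∀ j k, σ j k = -σ k j)
    (hS : ∀ j k, S j k = S k j) : ∑ j, ∑ k, σ j k * S j k = 0 := by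
  have h : (∑ j, ∑ k, σ j k * S j k) = - ∑ j, ∑ k, σ j k * S j k :=
    calc ∑ j, ∑ k, σ j k * S j k
        = ∑ k, ∑ j, σ j k * S j k := Finset.sum_comm
      _ = ∑ k, ∑ j, -(σ k j * S k j) :=
          Finset.sum_congr rfl fun k _ => Finset.sum_congr rfl fun j _ => by
            rw [hσ j k, hS j k]; ring
      _ = - ∑ k, ∑ j, σ k j * S k j := by simp
  linarith

theorem integrable_aux {c : EuclideanSpace ℝ (Fin d) → ℝ} (hc : Continuous c)
    {K : Set (EuclideanSpace ℝ (Fin d))} (hK : IsCompact K)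
    (h0 : ∀ x ∉ K, c x = 0) : Integrable c :=
  hc.integrable_of_hasCompactSupport (HasCompactSupport.intro hK h0)

theorem dot_sum (a : Fin d → ℝ) (w : Fin d → Fin d → ℝ) :
    a ⬝ᵥ (∑ i, w i) = ∑ i, a ⬝ᵥ w i := by
  unfold dotProduct
  rw [Finset.sum_comm]
  exact Finset.sum_congr rfl fun j _ => by simp [Finset.sum_apply, Finset.mul_sum]

theorem pd_w_eq (u v η : EuclideanSpace ℝ (Fin d) → ℝ)
    (φ : Fin d → EuclideanSpace ℝ (Fin d) → ℝ)
    (hu : ContDiff ℝ 1 u) (hv : ContDiff ℝ (⊤ : ℕ∞) v) (hη : ContDiff ℝ (⊤ : ℕ∞) η)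
    (hφ : ∀ i, ContDiff ℝ 1 (φ i)) (x : EuclideanSpace ℝ (Fin d)) (j : Fin d) :
    pd j (fun y => u y - (v y + η y * ∑ i, φ i y * pd i v y)) x
      = pd j u x - pd j v x - ∑ i, (φ i x * pd j (fun y => η y * pd i v y) x
        + (η x * pd i v x) * pd j (φ i) x) := by
  have hgi : ∀ i : Fin d, ContDiff ℝ (⊤ : ℕ∞) (fun y => η y * pd i v y) := fun i =>
    hη.mul ((hv.fderiv_right (by simp)).clm_apply contDiff_const)
  have hfeq : (fun y => u y - (v y + η y * ∑ i, φ i y * pd i v y))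
      = (fun y => u y - v y - ∑ i, φ i y * (η y * pd i v y)) := by
    funext y
    have : η y * ∑ i, φ i y * pd i v y = ∑ i, φ i y * (η y * pd i v y) := by
      rw [Finset.mul_sum]; exact Finset.sum_congr rfl fun i _ => by ring
    rw [this]; ring
  rw [hfeq]
  have hdu : DifferentiableAt ℝ u x := (hu.differentiable one_ne_zero).differentiableAt
  have hdv : DifferentiableAt ℝ v x := (hv.differentiable (by simp)).differentiableAt
  have hdφ : ∀ i, DifferentiableAt ℝ (φ i) x := fun i =>
    ((hφ i).differentiable one_ne_zero).differentiableAt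
  have hdgi : ∀ i : Fin d, DifferentiableAt ℝ (fun y => η y * pd i v y) x := fun i =>
    ((hgi i).differentiable (by simp)).differentiableAt
  have hdterm : ∀ i : Fin d, DifferentiableAt ℝ (fun y => φ i y * (η y * pd i v y)) x :=
    fun i => (hdφ i).mul (hdgi i)
  have hdsum : DifferentiableAt ℝ (fun y => ∑ i, φ i y * (η y * pd i v y)) x := by
    apply DifferentiableAt.fun_sum (fun i _ => hdterm i)
  show fderiv ℝ _ x _ = _
  rw [fderiv_fun_sub (hdu.fun_sub hdv) hdsum, fderiv_fun_sub hdu hdv,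
    fderiv_fun_sum (fun i _ => hdterm i)]
  have hterm : ∀ i : Fin d, fderiv ℝ (fun y => φ i y * (η y * pd i v y)) x
      = φ i x • fderiv ℝ (fun y => η y * pd i v y) x + (η x * pd i v x) • fderiv ℝ (φ i) x :=
    fun i => fderiv_fun_mul (hdφ i) (hdgi i)
  rw [show (∑ i, fderiv ℝ (fun y => φ i y * (η y * pd i v y)) x)
      = ∑ i : Fin d, (φ i x • fderiv ℝ (fun y => η y * pd i v y) x
        + (η x * pd i v x) • fderiv ℝ (φ i) x) from
    Finset.sum_congr rfl fun i _ => hterm i]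
  simp [pd]

theorem alg (d : ℕ) (ζ' dv du φv : Fin d → ℝ) (dφ G : Fin d → Fin d → ℝ)
    (a ab : Matrix (Fin d) (Fin d) ℝ) (ηv : ℝ) :
    ζ' ⬝ᵥ a.mulVec (fun l => du l - dv l - ∑ i, (φv i * G i l + (ηv * dv i) * dφ i l))
    = ζ' ⬝ᵥ a.mulVec du
      - ζ' ⬝ᵥ ((1 - ηv) • ((a - ab).mulVec dv))
      - (∑ i, ∑ j, (ζ' j * (ηv * dv i)) *
          (a.mulVec (dφ i + Pi.single i 1) j - ab.mulVec (Pi.single i 1) j))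
      - (∑ j, ζ' j * ab.mulVec dv j)
      - ∑ i, φv i * (ζ' ⬝ᵥ a.mulVec (G i)) := by
  simp only [Matrix.mulVec, dotProduct, Matrix.sub_apply, Pi.smul_apply, smul_eq_mul,
    Pi.add_apply, Pi.single_apply, mul_ite, mul_one, mul_zero, Finset.sum_ite_eq',
    Finset.mem_univ, if_true]
  rw [Finset.sum_comm (f := fun i j => ζ' j * (ηv * dv i) *
    (∑ x_2, a j x_2 * (dφ i x_2 + if x_2 = i then 1 else 0) - ab j i))]
  rw [show (∑ i, φv i * ∑ j, ζ' j * ∑ l, a j l * G i l)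
      = ∑ j, ∑ i, φv i * (ζ' j * ∑ l, a j l * G i l) by
    rw [Finset.sum_comm]
    exact Finset.sum_congr rfl fun j _ => by rw [Finset.mul_sum]]
  rw [← Finset.sum_sub_distrib, ← Finset.sum_sub_distrib, ← Finset.sum_sub_distrib,
    ← Finset.sum_sub_distrib]
  refine Finset.sum_congr rfl fun j _ => ?_
  have hL : ∑ l, a j l * (du l - dv l - ∑ i, (φv i * G i l + ηv * dv i * dφ i l))
      = ∑ l, a j l * du l - ∑ l, a j l * dv l
        - ∑ i, ∑ l, a j l * (φv i * G i l + ηv * dv i * dφ i l) := by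
    rw [Finset.sum_comm (f := fun i l => a j l * (φv i * G i l + ηv * dv i * dφ i l))]
    rw [← Finset.sum_sub_distrib, ← Finset.sum_sub_distrib]
    exact Finset.sum_congr rfl fun l _ => by rw [mul_sub, mul_sub, Finset.mul_sum]
  rw [hL, mul_sub, mul_sub, Finset.mul_sum]
  have h1 : ∀ i, ∑ l, a j l * (φv i * G i l + ηv * dv i * dφ i l)
      = φv i * (∑ l, a j l * G i l) + (ηv * dv i) * (∑ l, a j l * dφ i l) := by
    intro i
    rw [Finset.mul_sum, Finset.mul_sum, ← Finset.sum_add_distrib]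
    exact Finset.sum_congr rfl fun l _ => by ring
  have h2 : ∀ i, (∑ x_2, a j x_2 * (dφ i x_2 + if x_2 = i then 1 else 0))
      = (∑ l, a j l * dφ i l) + a j i := by
    intro i
    simp [mul_add, Finset.sum_add_distrib, mul_ite, Finset.sum_ite_eq', Finset.mem_univ]
  simp only [h1, h2]
  simp only [Finset.mul_sum]
  rw [← Finset.sum_sub_distrib, ← Finset.sum_sub_distrib, ← Finset.sum_sub_distrib,
    ← Finset.sum_sub_distrib, ← Finset.sum_sub_distrib, ← Finset.sum_sub_distrib]
  refine Finset.sum_congr rfl fun i _ => ?_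
  have e1 : (∑ x, φv i * (a j x * G i x)) = φv i * ∑ l, a j l * G i l := by
    rw [Finset.mul_sum]
  have e2 : (∑ x, ηv * dv i * (a j x * dφ i x)) = ηv * dv i * ∑ l, a j l * dφ i l := by
    rw [Finset.mul_sum]
  have e3 : (∑ x, φv i * (ζ' j * (a j x * G i x))) = φv i * ζ' j * ∑ l, a j l * G i l := by
    rw [Finset.mul_sum]; exact Finset.sum_congr rfl fun x _ => by ring
  rw [e1, e2, e3]; ring

end Stmt9Aux

open Stmt9Aux in
/-- Equation for the homogenization error: if `u` is `a`-harmonic, `v` is `ā`-harmonic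
in the ball `B`, `(φ_i, σ_i)` are correctors with `σ_i` skew-symmetric satisfying
`-∇·a(∇φ_i + e_i) = 0` and `a(∇φ_i + e_i) - ā e_i = ∇·σ_i` weakly, then
`w := u - (v + η φ_i ∂_i v)` satisfies, weakly in `B`,
`-∇·a∇w = ∇·((1-η)(a-ā)∇v + (φ_i a - σ_i)∇(η ∂_i v))`. -/
theorem stmt_9 (d : ℕ) (x₀ : EuclideanSpace ℝ (Fin d)) (R : ℝ) (hR : 0 < R)
    (A : EuclideanSpace ℝ (Fin d) → Matrix (Fin d) (Fin d) ℝ)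
    (abar : Matrix (Fin d) (Fin d) ℝ)
    (u v η : EuclideanSpace ℝ (Fin d) → ℝ)
    (φ : Fin d → EuclideanSpace ℝ (Fin d) → ℝ)
    (σ : Fin d → EuclideanSpace ℝ (Fin d) → Fin d → Fin d → ℝ)
    (hA : Continuous A) (hu : ContDiff ℝ 1 u) (hv : ContDiff ℝ (⊤ : ℕ∞) v) (hη : ContDiff ℝ (⊤ : ℕ∞) η)
    (hφ : ∀ i, ContDiff ℝ 1 (φ i)) (hσc : ∀ i j k, Continuous (fun x => σ i x j k))
    (hskew : ∀ i x j k, σ i x j k = - σ i x k j)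
    -- u is a-harmonic in B (weakly)
    (hueq : ∀ ζ : EuclideanSpace ℝ (Fin d) → ℝ, ContDiff ℝ (⊤ : ℕ∞) ζ →
      tsupport ζ ⊆ Metric.ball x₀ R →
      ∫ x, grad ζ x ⬝ᵥ (A x).mulVec (grad u x) = 0)
    -- v is ā-harmonic in B (classically)
    (hveq : ∀ x ∈ Metric.ball x₀ R,
      ∑ i, pd i (fun y => abar.mulVec (grad v y) i) x = 0)
    -- corrector equation: -∇·a(∇φ_i + e_i) = 0 weakly in B
    (hφeq : ∀ i, ∀ ζ : EuclideanSpace ℝ (Fin d) → ℝ, ContDiff ℝ (⊤ : ℕ∞) ζ →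
      tsupport ζ ⊆ Metric.ball x₀ R →
      ∫ x, grad ζ x ⬝ᵥ (A x).mulVec (grad (φ i) x + Pi.single i 1) = 0)
    -- flux corrector equation: a(∇φ_i + e_i) - ā e_i = ∇·σ_i weakly in B
    (hσeq : ∀ i j, ∀ ζ : EuclideanSpace ℝ (Fin d) → ℝ, ContDiff ℝ (⊤ : ℕ∞) ζ →
      tsupport ζ ⊆ Metric.ball x₀ R →
      ∫ x, ζ x * ((A x).mulVec (grad (φ i) x + Pi.single i 1) j -
        abar.mulVec (Pi.single i 1) j) =
        - ∫ x, ∑ k, σ i x j k * pd k ζ x) :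
    -- conclusion: the weak equation for w
    ∀ ζ : EuclideanSpace ℝ (Fin d) → ℝ, ContDiff ℝ (⊤ : ℕ∞) ζ →
      tsupport ζ ⊆ Metric.ball x₀ R →
      ∫ x, grad ζ x ⬝ᵥ
        (A x).mulVec (grad (fun y => u y - (v y + η y * ∑ i, φ i y * pd i v y)) x) =
      - ∫ x, grad ζ x ⬝ᵥ
        ((1 - η x) • ((A x - abar).mulVec (grad v x)) +
          ∑ i, (φ i x • (A x).mulVec (grad (fun y => η y * pd i v y) x) -
            (Matrix.of (σ i x)).mulVec (grad (fun y => η y * pd i v y) x))) := by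
  intro ζ hζ hsupp
  -- basic compactness and support facts
  have hK : IsCompact (tsupport ζ) :=
    (isCompact_closedBall x₀ R).of_isClosed_subset (isClosed_tsupport ζ)
      (hsupp.trans Metric.ball_subset_closedBall)
  have hζ0 : ∀ x ∉ tsupport ζ, ζ x = 0 := fun x hx => image_eq_zero_of_notMem_tsupport hx
  have hpdζ0 : ∀ (j : Fin d), ∀ x ∉ tsupport ζ, pd j ζ x = 0 := fun j x hx =>
    pd_zero_of_nmem j hx
  -- smoothness of auxiliary functions
  have hgi : ∀ i : Fin d, ContDiff ℝ (⊤ : ℕ∞) (fun y => η y * pd i v y) := fun i =>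
    hη.mul (pd_contDiff hv i)
  have hψ : ∀ i j : Fin d, ContDiff ℝ (⊤ : ℕ∞) (fun y => pd j ζ y * (η y * pd i v y)) := fun i j =>
    (pd_contDiff hζ j).mul (hgi i)
  have hts : ∀ i j : Fin d,
      tsupport (fun y => pd j ζ y * (η y * pd i v y)) ⊆ tsupport ζ := by
    intro i j
    refine subset_trans (tsupport_mul_subset_left) ?_
    exact closure_minimal (fun x hx => by
      simp only [Function.mem_support] at hx
      by_contra hmem
      exact hx (hpdζ0 j x hmem)) (isClosed_tsupport ζ)
  have hψsupp : ∀ i j : Fin d,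
      tsupport (fun y => pd j ζ y * (η y * pd i v y)) ⊆ Metric.ball x₀ R :=
    fun i j => (hts i j).trans hsupp
  -- continuity facts
  have hAc : ∀ j l : Fin d, Continuous (fun x => A x j l) := fun j l =>
    (continuous_apply l).comp ((continuous_apply j).comp hA)
  have hpduc : ∀ l : Fin d, Continuous (pd l u) := fun l => pd_continuous hu l
  have hpdvc : ∀ l : Fin d, Continuous (pd l v) := fun l => pd_continuous (hv.of_le (by simp)) l
  have hpdφc : ∀ i l : Fin d, Continuous (pd l (φ i)) := fun i l => pd_continuous (hφ i) l
  have hpdζc : ∀ l : Fin d, Continuous (pd l ζ) := fun l => pd_continuous (hζ.of_le (by simp)) l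
  have hpdgc : ∀ i l : Fin d, Continuous (pd l (fun y => η y * pd i v y)) := fun i l =>
    pd_continuous ((hgi i).of_le (by simp)) l
  have hηc : Continuous η := hη.continuous
  have hφcc : ∀ i, Continuous (φ i) := fun i => (hφ i).continuous
  -- gradient of w
  have hgw : ∀ x, grad (fun y => u y - (v y + η y * ∑ i, φ i y * pd i v y)) x
      = fun l => grad u x l - grad v x l - ∑ i,
          ((fun i => φ i x) i * (fun i => grad (fun y => η y * pd i v y) x) i l +
            (η x * grad v x i) * (fun i => grad (φ i) x) i l) :=
    fun x => funext fun l => pd_w_eq u v η φ hu hv hη hφ x l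
  -- pointwise identity for the integrand
  have hptw : ∀ x, grad ζ x ⬝ᵥ
        (A x).mulVec (grad (fun y => u y - (v y + η y * ∑ i, φ i y * pd i v y)) x)
      = (grad ζ x ⬝ᵥ (A x).mulVec (grad u x))
        - (grad ζ x ⬝ᵥ ((1 - η x) • ((A x - abar).mulVec (grad v x))))
        - (∑ i, ∑ j, (pd j ζ x * (η x * pd i v x)) *
            ((A x).mulVec (grad (φ i) x + Pi.single i 1) j - abar.mulVec (Pi.single i 1) j))
        - (∑ j, pd j ζ x * abar.mulVec (grad v x) j)
        - ∑ i, φ i x * (grad ζ x ⬝ᵥ (A x).mulVec (grad (fun y => η y * pd i v y) x)) := by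
    intro x
    rw [hgw x]
    exact alg d (grad ζ x) (grad v x) (grad u x) (fun i => φ i x)
      (fun i => grad (φ i) x) (fun i => grad (fun y => η y * pd i v y) x) (A x) abar (η x)
  -- generic integrability helper
  have hint : ∀ (c : EuclideanSpace ℝ (Fin d) → ℝ), Continuous c →
      (∀ x ∉ tsupport ζ, c x = 0) → Integrable c := fun c hc h0 =>
    integrable_aux hc hK h0
  -- integrability of the various pieces
  have hint1 : Integrable (fun x => grad ζ x ⬝ᵥ (A x).mulVec (grad u x)) := by
    refine hint _ ?_ ?_
    · show Continuous fun x => ∑ j, pd j ζ x * ∑ l, A x j l * pd l u x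
      exact continuous_finset_sum _ fun j _ => (hpdζc j).mul
        (continuous_finset_sum _ fun l _ => (hAc j l).mul (hpduc l))
    · intro x hx
      show (∑ j, pd j ζ x * _) = 0
      exact Finset.sum_eq_zero fun j _ => by rw [hpdζ0 j x hx, zero_mul]
  have hint2 : Integrable (fun x => grad ζ x ⬝ᵥ
      ((1 - η x) • ((A x - abar).mulVec (grad v x)))) := by
    refine hint _ ?_ ?_
    · show Continuous fun x => ∑ j, pd j ζ x * ((1 - η x) * ∑ l, (A x j l - abar j l) * pd l v x)
      exact continuous_finset_sum _ fun j _ => (hpdζc j).mul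
        (((continuous_const.sub hηc)).mul
          (continuous_finset_sum _ fun l _ => ((hAc j l).sub continuous_const).mul (hpdvc l)))
    · intro x hx
      show (∑ j, pd j ζ x * _) = 0
      exact Finset.sum_eq_zero fun j _ => by rw [hpdζ0 j x hx, zero_mul]
  have hint3 : ∀ i j : Fin d, Integrable (fun x => (pd j ζ x * (η x * pd i v x)) *
      ((A x).mulVec (grad (φ i) x + Pi.single i 1) j - abar.mulVec (Pi.single i 1) j)) := by
    intro i j
    refine hint _ ?_ ?_
    · show Continuous fun x => (pd j ζ x * (η x * pd i v x)) *
        ((∑ l, A x j l * (pd l (φ i) x + (Pi.single i 1 : Fin d → ℝ) l)) - abar.mulVec (Pi.single i 1) j)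
      refine (((hpdζc j).mul (hηc.mul (hpdvc i))).mul ?_)
      refine Continuous.sub ?_ continuous_const
      exact continuous_finset_sum _ fun l _ => (hAc j l).mul
        ((hpdφc i l).add continuous_const)
    · intro x hx
      rw [hpdζ0 j x hx]; ring
  have hint3t : Integrable (fun x => ∑ i, ∑ j, (pd j ζ x * (η x * pd i v x)) *
      ((A x).mulVec (grad (φ i) x + Pi.single i 1) j - abar.mulVec (Pi.single i 1) j)) := by
    apply integrable_finset_sum
    intro i _
    apply integrable_finset_sum
    intro j _
    exact hint3 i j
  have hint4 : ∀ j : Fin d, Integrable (fun x => pd j ζ x * abar.mulVec (grad v x) j) := by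
    intro j
    refine hint _ ?_ ?_
    · show Continuous fun x => pd j ζ x * ∑ l, abar j l * pd l v x
      exact (hpdζc j).mul (continuous_finset_sum _ fun l _ => continuous_const.mul (hpdvc l))
    · intro x hx
      rw [hpdζ0 j x hx, zero_mul]
  have hint4t : Integrable (fun x => ∑ j, pd j ζ x * abar.mulVec (grad v x) j) :=
    integrable_finset_sum _ fun j _ => hint4 j
  have hint5 : ∀ i : Fin d, Integrable (fun x => φ i x *
      (grad ζ x ⬝ᵥ (A x).mulVec (grad (fun y => η y * pd i v y) x))) := by
    intro i
    refine hint _ ?_ ?_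
    · show Continuous fun x => φ i x *
        ∑ j, pd j ζ x * ∑ l, A x j l * pd l (fun y => η y * pd i v y) x
      exact (hφcc i).mul (continuous_finset_sum _ fun j _ => (hpdζc j).mul
        (continuous_finset_sum _ fun l _ => (hAc j l).mul (hpdgc i l)))
    · intro x hx
      have : (grad ζ x ⬝ᵥ (A x).mulVec (grad (fun y => η y * pd i v y) x)) = 0 := by
        show (∑ j, pd j ζ x * _) = 0
        exact Finset.sum_eq_zero fun j _ => by rw [hpdζ0 j x hx, zero_mul]
      rw [this, mul_zero]
  have hint5t : Integrable (fun x => ∑ i, φ i x *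
      (grad ζ x ⬝ᵥ (A x).mulVec (grad (fun y => η y * pd i v y) x))) :=
    integrable_finset_sum _ fun i _ => hint5 i
  have hint6 : ∀ i : Fin d, Integrable (fun x => grad ζ x ⬝ᵥ
      (Matrix.of (σ i x)).mulVec (grad (fun y => η y * pd i v y) x)) := by
    intro i
    refine hint _ ?_ ?_
    · show Continuous fun x => ∑ j, pd j ζ x *
        ∑ k, σ i x j k * pd k (fun y => η y * pd i v y) x
      exact continuous_finset_sum _ fun j _ => (hpdζc j).mul
        (continuous_finset_sum _ fun k _ => (hσc i j k).mul (hpdgc i k))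
    · intro x hx
      show (∑ j, pd j ζ x * _) = 0
      exact Finset.sum_eq_zero fun j _ => by rw [hpdζ0 j x hx, zero_mul]
  have hint7 : ∀ i j : Fin d, Integrable (fun x => ∑ k, σ i x j k *
      pd k (fun y => pd j ζ y * (η y * pd i v y)) x) := by
    intro i j
    refine hint _ ?_ ?_
    · exact continuous_finset_sum _ fun k _ => (hσc i j k).mul
        (pd_continuous ((hψ i j).of_le (by simp)) k)
    · intro x hx
      refine Finset.sum_eq_zero fun k _ => ?_
      have : pd k (fun y => pd j ζ y * (η y * pd i v y)) x = 0 :=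
        pd_zero_of_nmem k (fun hmem => hx (hts i j hmem))
      rw [this, mul_zero]
  -- ibp: the abar term vanishes
  have hmv : ∀ j : Fin d, ContDiff ℝ (⊤ : ℕ∞) (fun y => abar.mulVec (grad v y) j) := by
    intro j
    show ContDiff ℝ (⊤ : ℕ∞) (fun y => ∑ l, abar j l * pd l v y)
    exact ContDiff.sum fun l _ => contDiff_const.mul (pd_contDiff hv l)
  have hintbp1 : ∀ j : Fin d, Integrable
      (fun x => ζ x * pd j (fun y => abar.mulVec (grad v y) j) x) := by
    intro j
    refine hint _ (hζ.continuous.mul (pd_continuous ((hmv j).of_le (by simp)) j)) ?_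
    intro x hx
    rw [hζ0 x hx, zero_mul]
  have hbp : ∀ j : Fin d, ∫ x, pd j ζ x * abar.mulVec (grad v x) j
      = - ∫ x, ζ x * pd j (fun y => abar.mulVec (grad v y) j) x := by
    intro j
    have h1 := integral_mul_fderiv_eq_neg_fderiv_mul_of_integrable (μ := volume)
      (f := fun y => abar.mulVec (grad v y) j) (g := ζ) (v := EuclideanSpace.single j 1)
      (by
        refine hint _ ((pd_continuous ((hmv j).of_le (by simp)) j).mul hζ.continuous) ?_
        intro x hx
        show pd j (fun y => abar.mulVec (grad v y) j) x * ζ x = 0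
        rw [hζ0 x hx, mul_zero])
      (by
        refine hint _ ?_ ?_
        · show Continuous fun x => (∑ l, abar j l * pd l v x) * pd j ζ x
          exact (continuous_finset_sum _ fun l _ => continuous_const.mul (hpdvc l)).mul (hpdζc j)
        · intro x hx
          show abar.mulVec (grad v x) j * pd j ζ x = 0
          rw [hpdζ0 j x hx, mul_zero])
      (by
        refine hint _ ?_ ?_
        · show Continuous fun x => (∑ l, abar j l * pd l v x) * ζ x
          exact (continuous_finset_sum _ fun l _ => continuous_const.mul (hpdvc l)).mul hζ.continuous
        · intro x hx
          show abar.mulVec (grad v x) j * ζ x = 0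
          rw [hζ0 x hx, mul_zero])
      (fun x _ => ((hmv j).differentiable (by simp)).differentiableAt) (fun x _ => (hζ.differentiable (by simp)).differentiableAt)
    rw [show (fun x => pd j ζ x * abar.mulVec (grad v x) j)
        = fun x => abar.mulVec (grad v x) j * pd j ζ x from funext fun x => mul_comm _ _]
    rw [show (fun x => ζ x * pd j (fun y => abar.mulVec (grad v y) j) x)
        = fun x => pd j (fun y => abar.mulVec (grad v y) j) x * ζ x from
      funext fun x => mul_comm _ _]
    exact h1
  have hI4 : ∫ x, ∑ j, pd j ζ x * abar.mulVec (grad v x) j = 0 := by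
    rw [integral_finset_sum _ (fun j _ => hint4 j)]
    rw [Finset.sum_congr rfl (fun j _ => hbp j)]
    rw [Finset.sum_neg_distrib, ← integral_finset_sum _ (fun j _ => hintbp1 j)]
    have hz : ∀ x, ∑ j, ζ x * pd j (fun y => abar.mulVec (grad v y) j) x = 0 := by
      intro x
      by_cases hx : x ∈ Metric.ball x₀ R
      · rw [← Finset.mul_sum, hveq x hx, mul_zero]
      · have h0 : ζ x = 0 := hζ0 x (fun hmem => hx (hsupp hmem))
        exact Finset.sum_eq_zero fun j _ => by rw [h0, zero_mul]
    simp only [hz, integral_zero, neg_zero]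
  -- differentiability for the product rule
  have hdpdζ : ∀ j : Fin d, Differentiable ℝ (fun y => pd j ζ y) :=
    fun j => (pd_contDiff hζ j).differentiable (by simp)
  have hdgi : ∀ i : Fin d, Differentiable ℝ (fun y => η y * pd i v y) :=
    fun i => (hgi i).differentiable (by simp)
  -- the sigma term
  have hI3 : ∀ i : Fin d, ∫ x, ∑ j, (pd j ζ x * (η x * pd i v x)) *
      ((A x).mulVec (grad (φ i) x + Pi.single i 1) j - abar.mulVec (Pi.single i 1) j)
      = - ∫ x, grad ζ x ⬝ᵥ (Matrix.of (σ i x)).mulVec (grad (fun y => η y * pd i v y) x) := by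
    intro i
    rw [integral_finset_sum _ (fun j _ => hint3 i j)]
    rw [Finset.sum_congr rfl (fun j _ => hσeq i j _ (hψ i j) (hψsupp i j))]
    rw [Finset.sum_neg_distrib, ← integral_finset_sum _ (fun j _ => hint7 i j)]
    have hpt : (fun x => ∑ j, ∑ k, σ i x j k *
          pd k (fun y => pd j ζ y * (η y * pd i v y)) x)
        = fun x => grad ζ x ⬝ᵥ (Matrix.of (σ i x)).mulVec
            (grad (fun y => η y * pd i v y) x) := by
      funext x
      have hsplit : ∀ j k : Fin d, pd k (fun y => pd j ζ y * (η y * pd i v y)) x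
          = pd j ζ x * pd k (fun y => η y * pd i v y) x
            + (η x * pd i v x) * pd k (fun y => pd j ζ y) x := fun j k =>
        pd_mul ((hdpdζ j).differentiableAt) ((hdgi i).differentiableAt) k
      have hz2 : ∑ j, ∑ k, σ i x j k * ((η x * pd i v x) * pd k (fun y => pd j ζ y) x)
          = (η x * pd i v x) * ∑ j, ∑ k, σ i x j k * pd k (fun y => pd j ζ y) x := by
        rw [Finset.mul_sum]
        refine Finset.sum_congr rfl fun j _ => ?_
        rw [Finset.mul_sum]
        exact Finset.sum_congr rfl fun k _ => by ring
      calc ∑ j, ∑ k, σ i x j k * pd k (fun y => pd j ζ y * (η y * pd i v y)) x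
          = ∑ j, ∑ k, (σ i x j k * (pd j ζ x * pd k (fun y => η y * pd i v y) x)
              + σ i x j k * ((η x * pd i v x) * pd k (fun y => pd j ζ y) x)) := by
            refine Finset.sum_congr rfl fun j _ => Finset.sum_congr rfl fun k _ => ?_
            rw [hsplit j k]; ring
        _ = (∑ j, ∑ k, σ i x j k * (pd j ζ x * pd k (fun y => η y * pd i v y) x))
              + ∑ j, ∑ k, σ i x j k * ((η x * pd i v x) * pd k (fun y => pd j ζ y) x) := by
            rw [← Finset.sum_add_distrib]
            exact Finset.sum_congr rfl fun j _ => by rw [← Finset.sum_add_distrib]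
        _ = ∑ j, ∑ k, σ i x j k * (pd j ζ x * pd k (fun y => η y * pd i v y) x) := by
            rw [hz2, skew_pair (σ i x) _ (hskew i x) (fun j k => pd_pd_symm hζ j k x),
              mul_zero, add_zero]
        _ = grad ζ x ⬝ᵥ (Matrix.of (σ i x)).mulVec (grad (fun y => η y * pd i v y) x) := by
            show _ = ∑ j, pd j ζ x * ∑ k, σ i x j k * pd k (fun y => η y * pd i v y) x
            refine Finset.sum_congr rfl fun j _ => ?_
            rw [Finset.mul_sum]
            exact Finset.sum_congr rfl fun k _ => by ring
    rw [hpt]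
  -- right-hand side pointwise expansion
  have hptR : ∀ x, grad ζ x ⬝ᵥ ((1 - η x) • ((A x - abar).mulVec (grad v x)) +
        ∑ i, (φ i x • (A x).mulVec (grad (fun y => η y * pd i v y) x) -
          (Matrix.of (σ i x)).mulVec (grad (fun y => η y * pd i v y) x)))
      = (grad ζ x ⬝ᵥ ((1 - η x) • ((A x - abar).mulVec (grad v x))))
        + ∑ i, (φ i x * (grad ζ x ⬝ᵥ (A x).mulVec (grad (fun y => η y * pd i v y) x))
            - grad ζ x ⬝ᵥ (Matrix.of (σ i x)).mulVec (grad (fun y => η y * pd i v y) x)) := by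
    intro x
    rw [dotProduct_add, dot_sum]
    congr 1
    refine Finset.sum_congr rfl fun i _ => ?_
    rw [dotProduct_sub, dotProduct_smul]
    rfl
  have hRHSeq : ∫ x, grad ζ x ⬝ᵥ ((1 - η x) • ((A x - abar).mulVec (grad v x)) +
        ∑ i, (φ i x • (A x).mulVec (grad (fun y => η y * pd i v y) x) -
          (Matrix.of (σ i x)).mulVec (grad (fun y => η y * pd i v y) x)))
      = (∫ x, grad ζ x ⬝ᵥ ((1 - η x) • ((A x - abar).mulVec (grad v x))))
        + ∑ i, ((∫ x, φ i x * (grad ζ x ⬝ᵥ (A x).mulVec (grad (fun y => η y * pd i v y) x)))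
            - ∫ x, grad ζ x ⬝ᵥ (Matrix.of (σ i x)).mulVec
                (grad (fun y => η y * pd i v y) x)) := by
    have hint56 : ∀ i : Fin d, Integrable (fun x =>
        φ i x * (grad ζ x ⬝ᵥ (A x).mulVec (grad (fun y => η y * pd i v y) x))
          - grad ζ x ⬝ᵥ (Matrix.of (σ i x)).mulVec (grad (fun y => η y * pd i v y) x)) :=
      fun i => (hint5 i).sub (hint6 i)
    simp only [hptR]
    rw [integral_add hint2 (integrable_finset_sum _ fun i _ => hint56 i)]
    rw [integral_finset_sum _ (fun i _ => hint56 i)]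
    congr 1
    exact Finset.sum_congr rfl fun i _ => integral_sub (hint5 i) (hint6 i)
  -- final assembly
  calc ∫ x, grad ζ x ⬝ᵥ
        (A x).mulVec (grad (fun y => u y - (v y + η y * ∑ i, φ i y * pd i v y)) x)
      = ∫ x, ((grad ζ x ⬝ᵥ (A x).mulVec (grad u x))
        - (grad ζ x ⬝ᵥ ((1 - η x) • ((A x - abar).mulVec (grad v x))))
        - (∑ i, ∑ j, (pd j ζ x * (η x * pd i v x)) *
            ((A x).mulVec (grad (φ i) x + Pi.single i 1) j - abar.mulVec (Pi.single i 1) j))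
        - (∑ j, pd j ζ x * abar.mulVec (grad v x) j)
        - ∑ i, φ i x * (grad ζ x ⬝ᵥ (A x).mulVec (grad (fun y => η y * pd i v y) x))) := by
        simp only [hptw]
    _ = (∫ x, grad ζ x ⬝ᵥ (A x).mulVec (grad u x))
        - (∫ x, grad ζ x ⬝ᵥ ((1 - η x) • ((A x - abar).mulVec (grad v x))))
        - (∫ x, ∑ i, ∑ j, (pd j ζ x * (η x * pd i v x)) *
            ((A x).mulVec (grad (φ i) x + Pi.single i 1) j - abar.mulVec (Pi.single i 1) j))
        - (∫ x, ∑ j, pd j ζ x * abar.mulVec (grad v x) j)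
        - ∫ x, ∑ i, φ i x *
            (grad ζ x ⬝ᵥ (A x).mulVec (grad (fun y => η y * pd i v y) x)) := by
        have hintA : Integrable (fun x => (grad ζ x ⬝ᵥ (A x).mulVec (grad u x))
            - (grad ζ x ⬝ᵥ ((1 - η x) • ((A x - abar).mulVec (grad v x))))) :=
          hint1.sub hint2
        have hintB : Integrable (fun x => (grad ζ x ⬝ᵥ (A x).mulVec (grad u x))
            - (grad ζ x ⬝ᵥ ((1 - η x) • ((A x - abar).mulVec (grad v x))))
            - (∑ i, ∑ j, (pd j ζ x * (η x * pd i v x)) *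
              ((A x).mulVec (grad (φ i) x + Pi.single i 1) j
                - abar.mulVec (Pi.single i 1) j))) := hintA.sub hint3t
        have hintC : Integrable (fun x => (grad ζ x ⬝ᵥ (A x).mulVec (grad u x))
            - (grad ζ x ⬝ᵥ ((1 - η x) • ((A x - abar).mulVec (grad v x))))
            - (∑ i, ∑ j, (pd j ζ x * (η x * pd i v x)) *
              ((A x).mulVec (grad (φ i) x + Pi.single i 1) j
                - abar.mulVec (Pi.single i 1) j))
            - (∑ j, pd j ζ x * abar.mulVec (grad v x) j)) := hintB.sub hint4t
        rw [integral_sub hintC hint5t, integral_sub hintB hint4t,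
          integral_sub hintA hint3t, integral_sub hint1 hint2]
    _ = - ∫ x, grad ζ x ⬝ᵥ ((1 - η x) • ((A x - abar).mulVec (grad v x)) +
          ∑ i, (φ i x • (A x).mulVec (grad (fun y => η y * pd i v y) x) -
            (Matrix.of (σ i x)).mulVec (grad (fun y => η y * pd i v y) x))) := by
        rw [hueq ζ hζ hsupp, hI4,
          integral_finset_sum _ (fun i _ => integrable_finset_sum _ fun j _ => hint3 i j),
          Finset.sum_congr rfl (fun i _ => hI3 i),
          integral_finset_sum _ (fun i _ => hint5 i), hRHSeq, Finset.sum_sub_distrib,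
          Finset.sum_neg_distrib]
        ring
end
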